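/- Let c ∈ (0, c_crit) and let h : J → ℝ be a solution of the transformed Jang equation dh/ds = F_c(s, h(s)) on an interval J that is symmetric about 0 (J = -J), taking values in [-1,1], and satisfying h(0) = 0. Then h is an odd function: h(-s) = -h(s) for all s ∈ J. -/

import Mathlib

/-!
The radius `r_c(s)` depends on `s` only through `s²` (because `φ` is injective on `(0, ∞)`),
and `F_c(-s, r, -h) = F_c(s, r, h)`. Hence `s ↦ -h(-s)` solves the same initial value problem
as `h`. On `r > 0`, `|h| ≤ 1` the radicand in `F_c` stays positive, so `F_c` is `C¹` there and
thus Lipschitz in `h` uniformly for `(s, r)` in compact sets; Grönwall uniqueness then forces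
`h(-s) = -h(s)`.
-/

/-- The function `φ(r) = e^{r/(2m)-1}(r - 2m)` defining the Kruskal radius implicitly. -/
noncomputable def phi (m r : ℝ) : ℝ := Real.exp (r / (2*m) - 1) * (r - 2*m)

/-- The derivative `φ_r(r) = (r/(2m)) e^{r/(2m)-1}`. -/
noncomputable def phiR (m r : ℝ) : ℝ := (r / (2*m)) * Real.exp (r / (2*m) - 1)

/-- The critical parameter `c_crit = √(8m/e)`. -/
noncomputable def cCrit (m : ℝ) : ℝ := Real.sqrt (8*m / Real.exp 1)

/-- The right-hand side of Jang's equation on the slice `L_c`: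
`f''(u) = jangRHS m c u r (f'(u))` where `r = r(u)` solves `φ(r) = u(u+c)`. -/
noncomputable def jangRHS (m c u r p : ℝ) : ℝ :=
  c * Real.sqrt (2*m / phiR m r + p^2/4) *
      ((1 / phiR m r) * (1/(2*m) - 3/r) - p^2/(2*m*r))
    - ((2*u + c)/(4*m*r)) * p^3
    - ((2*u + c)/(2 * phiR m r)) * (1/(2*m) + 5/r) * p

/-- The right-hand side `F_c(s,h)` of the transformed Jang equation,
with `r = r_c(s)` solving `φ(r) = (c²/4)(s²-1)`. -/
noncomputable def Fc (m c s r h : ℝ) : ℝ :=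
  (c^2/2) * Real.sqrt (2*m*(1 - h^2) / phiR m r + h^2/4) *
      (((1 - h^2) / phiR m r) * (1/(2*m) - 3/r) - h^2/(2*m*r))
    - (c^2*s/(8*m*r)) * h^3
    - (c^2*s/(4 * phiR m r)) * (1/(2*m) + 5/r) * (h*(1 - h^2))

open Set

lemma phiR_pos {m r : ℝ} (hm : 0 < m) (hr : 0 < r) : 0 < phiR m r := by
  unfold phiR; positivity

@[fun_prop]
lemma contDiff_phiR (m : ℝ) {n : WithTop ℕ∞} : ContDiff ℝ n (phiR m) := by
  unfold phiR; fun_prop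

lemma hasDerivAt_phi {m : ℝ} (hm : m ≠ 0) (r : ℝ) : HasDerivAt (phi m) (phiR m r) r := by
  have hexp : HasDerivAt (fun r => Real.exp (r / (2*m) - 1))
      (Real.exp (r / (2*m) - 1) * (1 / (2*m))) r := by
    simpa using (((hasDerivAt_id r).div_const (2*m)).sub_const 1).exp
  refine (hexp.mul ((hasDerivAt_id' r).sub_const (2*m))).congr_deriv ?_
  unfold phiR
  field_simp
  ring

lemma phi_strictMonoOn {m : ℝ} (hm : 0 < m) : StrictMonoOn (phi m) (Ioi 0) :=
  strictMonoOn_of_deriv_pos (convex_Ioi 0)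
    (fun r _ => (hasDerivAt_phi hm.ne' r).continuousAt.continuousWithinAt)
    (fun r hr => by
      rw [interior_Ioi] at hr
      rw [(hasDerivAt_phi hm.ne' r).deriv]
      exact phiR_pos hm hr)

section radius

variable {m c : ℝ} {Rc : ℝ → ℝ}

lemma radius_le_of_sq_le (hm : 0 < m) (hRc : ∀ s, 0 < Rc s ∧ phi m (Rc s) = c^2/4 * (s^2 - 1))
    {s t : ℝ} (hst : s^2 ≤ t^2) : Rc s ≤ Rc t := by
  rw [← (phi_strictMonoOn hm).le_iff_le (hRc s).1 (hRc t).1, (hRc s).2, (hRc t).2]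
  gcongr

lemma radius_neg (hm : 0 < m) (hRc : ∀ s, 0 < Rc s ∧ phi m (Rc s) = c^2/4 * (s^2 - 1))
    (s : ℝ) : Rc (-s) = Rc s :=
  le_antisymm (radius_le_of_sq_le hm hRc (neg_sq s).le)
    (radius_le_of_sq_le hm hRc (neg_sq s).ge)

lemma radius_mem_Icc (hm : 0 < m) (hRc : ∀ s, 0 < Rc s ∧ phi m (Rc s) = c^2/4 * (s^2 - 1))
    {b t : ℝ} (ht : t ∈ Icc (-b) b) : Rc t ∈ Icc (Rc 0) (Rc b) :=
  ⟨radius_le_of_sq_le hm hRc (by simpa using sq_nonneg t),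
    radius_le_of_sq_le hm hRc (sq_le_sq' ht.1 ht.2)⟩

end radius

lemma Fc_neg_neg (m c s r x : ℝ) : Fc m c (-s) r (-x) = Fc m c s r x := by
  unfold Fc
  rw [neg_sq]
  ring

lemma Fc_contDiffAt {m c : ℝ} (hm : 0 < m) {p : ℝ × ℝ × ℝ} (hr : 0 < p.2.1)
    (hx : p.2.2 ∈ Icc (-1 : ℝ) 1) :
    ContDiffAt ℝ 1 (fun p : ℝ × ℝ × ℝ => Fc m c p.1 p.2.1 p.2.2) p := by
  obtain ⟨s, r, x⟩ := p
  have hφ := phiR_pos hm hr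
  have hrad : 0 < 2*m*(1 - x^2) / phiR m r + x^2/4 := by
    have hx2 : x^2 ≤ 1 := sq_le_one_iff_abs_le_one x |>.mpr (abs_le.mpr hx)
    rcases eq_or_ne x 0 with rfl | hx0
    · simpa using div_pos (mul_pos two_pos hm) hφ
    · have : 0 ≤ 2*m*(1 - x^2) / phiR m r := div_nonneg (by nlinarith) hφ.le
      positivity
  unfold Fc
  fun_prop (disch := first | exact hrad.ne' | positivity)

lemma exists_lipschitzOnWith_Fc {m c : ℝ} (hm : 0 < m) (b : ℝ) {r₁ : ℝ} (hr₁ : 0 < r₁)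
    (r₂ : ℝ) :
    ∃ K, ∀ s ∈ Icc (-b) b, ∀ r ∈ Icc r₁ r₂,
      LipschitzOnWith K (Fc m c s r) (Icc (-1) 1) := by
  obtain ⟨K, hK⟩ := ContDiffOn.exists_lipschitzOnWith
    (s := Icc (-b) b ×ˢ Icc r₁ r₂ ×ˢ Icc (-1 : ℝ) 1)
    (fun p hp => (Fc_contDiffAt (c := c) hm (hr₁.trans_le hp.2.1.1) hp.2.2).contDiffWithinAt)
    one_ne_zero ((convex_Icc _ _).prod ((convex_Icc _ _).prod (convex_Icc _ _)))
    (isCompact_Icc.prod (isCompact_Icc.prod isCompact_Icc))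
  refine ⟨K, fun s hs r hr => ?_⟩
  have hslice := hK.comp
    ((LipschitzWith.prodMk_left s).comp (LipschitzWith.prodMk_left r)).lipschitzOnWith
    (fun x hx => ⟨hs, hr, hx⟩)
  simpa [Function.comp_def] using hslice

theorem ODE_solution_odd_of_mem_Icc {E : Type*} [NormedAddCommGroup E] [NormedSpace ℝ E]
    {v : ℝ → E → E} {s : Set E} {K : NNReal} {f : ℝ → E} {b : ℝ} (hb : 0 < b)
    (hv : ∀ t ∈ Ioo (-b) b, LipschitzOnWith K (v t) s)
    (hv_neg : ∀ t x, v (-t) (-x) = v t x) (hs : ∀ x ∈ s, -x ∈ s)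
    (hf : ContinuousOn f (Icc (-b) b))
    (hf' : ∀ t ∈ Ioo (-b) b, HasDerivAt f (v t (f t)) t)
    (hfs : ∀ t ∈ Ioo (-b) b, f t ∈ s) (hf0 : f 0 = 0) :
    ∀ t ∈ Icc (-b) b, f (-t) = -f t := by
  have hneg : ∀ {t}, t ∈ Ioo (-b) b → -t ∈ Ioo (-b) b := fun ht =>
    ⟨neg_lt_neg ht.2, neg_lt.mp ht.1⟩
  have hg' : ∀ t ∈ Ioo (-b) b, HasDerivAt (fun t => -f (-t)) (v t (-f (-t))) t := by
    intro t ht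
    have := ((hf' (-t) (hneg ht)).scomp t (hasDerivAt_neg t)).neg
    rwa [neg_one_smul, neg_neg, ← hv_neg, neg_neg] at this
  have hunique := ODE_solution_unique_of_mem_Icc hv ⟨neg_lt_zero.mpr hb, hb⟩ hf hf' hfs
    (hf.comp continuousOn_neg fun t ht => ⟨neg_le_neg ht.2, neg_le.mp ht.1⟩).neg hg'
    (fun t ht => hs _ (hfs _ (hneg ht))) (by simp [hf0])
  intro t ht
  rw [hunique ht]
  simp

theorem solution_is_odd_general (m c : ℝ) (hm : 0 < m)
    (Rc : ℝ → ℝ)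
    (hRc : ∀ s, 0 < Rc s ∧ phi m (Rc s) = c^2/4 * (s^2 - 1))
    (J : Set ℝ) (hJconn : J.OrdConnected) (hJsymm : (-J : Set ℝ) = J)
    (h : ℝ → ℝ)
    (hrange : ∀ s ∈ J, h s ∈ Set.Icc (-1:ℝ) 1)
    (hsol : ∀ s ∈ J, HasDerivWithinAt h (Fc m c s (Rc s) (h s)) J s)
    (hinit : h 0 = 0) :
    ∀ s ∈ J, h (-s) = -h s := by
  intro s₀ hs₀
  rcases eq_or_ne s₀ 0 with rfl | hs₀0
  · simp [hinit]
  have hJneg : ∀ t ∈ J, -t ∈ J := fun t ht => by rwa [← hJsymm, Set.neg_mem_neg]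
  have hIcc : Icc (-|s₀|) |s₀| ⊆ J := by
    have habs : |s₀| ∈ J := by
      rcases abs_choice s₀ with hs | hs <;> rw [hs]
      exacts [hs₀, hJneg _ hs₀]
    exact hJconn.out (hJneg _ habs) habs
  obtain ⟨K, hK⟩ := exists_lipschitzOnWith_Fc (c := c) hm |s₀| (hRc 0).1 (Rc |s₀|)
  refine ODE_solution_odd_of_mem_Icc (v := fun t => Fc m c t (Rc t)) (abs_pos.mpr hs₀0)
    (fun t ht => hK t (Ioo_subset_Icc_self ht) _ (radius_mem_Icc hm hRc (Ioo_subset_Icc_self ht)))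
    (fun t x => by simp only [radius_neg hm hRc, Fc_neg_neg])
    (fun x hx => ⟨neg_le_neg hx.2, neg_le.mp hx.1⟩)
    (fun t ht => (hsol t (hIcc ht)).continuousWithinAt.mono hIcc)
    (fun t ht => (hsol t (hIcc (Ioo_subset_Icc_self ht))).hasDerivAt
      (Filter.mem_of_superset (Icc_mem_nhds ht.1 ht.2) hIcc))
    (fun t ht => hrange t (hIcc (Ioo_subset_Icc_self ht))) hinit s₀
    ⟨neg_abs_le s₀, le_abs_self s₀⟩

/-- A solution of the transformed Jang equation on a symmetric interval `J`,
taking values in `[-1,1]` with `h(0) = 0`, is odd: `h(-s) = -h(s)` for all `s ∈ J`. -/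
theorem solution_is_odd (m c : ℝ) (hm : 0 < m) (hc : c ∈ Set.Ioo 0 (cCrit m))
    (Rc : ℝ → ℝ)
    (hRc : ∀ s, 0 < Rc s ∧ phi m (Rc s) = c^2/4 * (s^2 - 1))
    (J : Set ℝ) (hJconn : J.OrdConnected) (hJsymm : (-J : Set ℝ) = J) (h0mem : (0:ℝ) ∈ J)
    (h : ℝ → ℝ)
    (hrange : ∀ s ∈ J, h s ∈ Set.Icc (-1:ℝ) 1)
    (hsol : ∀ s ∈ J, HasDerivWithinAt h (Fc m c s (Rc s) (h s)) J s)
    (hinit : h 0 = 0) :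
    ∀ s ∈ J, h (-s) = -h s :=
  solution_is_odd_general m c hm Rc hRc J hJconn hJsymm h hrange hsol hinit
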